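/- (Theorem 1(i)) Let A ⊆ ℝⁿ be a bounded closed set with 0 ∈ A ⊆ B₁ and Ω := ℝⁿ \ A. Let u be continuous on the closure of Ω and infinity harmonic in Ω with limsup_{x→∞} |u(x)|/|x| < +∞. If S_∞ = 0, then m⁻ ≤ u(x) ≤ m⁺ for all x ∈ Ω. -/

import Mathlib

/-!
Both bounds follow from one-sided cone comparison, the lower one applied to `-u`. Fix `δ > 0`.
Since `u` is continuous up to the compact boundary, `u < m⁺ + δ` on a thin layer
`{0 < dist(·, A) ≤ ε}`. On `V = B_r ∩ {dist(·, A) > ε}` the cone `S⁺_r |x| + m⁺ + δ` with vertex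
`0 ∈ A` dominates `u` on `∂V`: on the inner part by the choice of `ε`, on `∂B_r` by definition of
`S⁺_r`. Comparison with cones gives `u(x) ≤ S⁺_r |x| + m⁺ + δ`, and letting `r → ∞`, then `δ → 0`,
yields `u(x) ≤ m⁺`.
-/

open Metric Set Filter Bornology Topology
open scoped RealInnerProductSpace

noncomputable section

/-- Euclidean space ℝⁿ. -/
abbrev Euc (n : ℕ) := EuclideanSpace ℝ (Fin n)

/-- Comparison with cones from above (infinity subharmonic). -/
def CmpAbove {n : ℕ} (Ω : Set (Euc n)) (u : Euc n → ℝ) : Prop :=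
  ∀ V : Set (Euc n), IsOpen V → IsBounded V → closure V ⊆ Ω →
    ∀ (x₀ : Euc n) (a b : ℝ),
      (∀ x ∈ frontier (V \ {x₀}), u x ≤ a * ‖x - x₀‖ + b) →
      ∀ x ∈ V, u x ≤ a * ‖x - x₀‖ + b

/-- Comparison with cones from below (infinity superharmonic). -/
def CmpBelow {n : ℕ} (Ω : Set (Euc n)) (u : Euc n → ℝ) : Prop :=
  ∀ V : Set (Euc n), IsOpen V → IsBounded V → closure V ⊆ Ω →
    ∀ (x₀ : Euc n) (a b : ℝ),
      (∀ x ∈ frontier (V \ {x₀}), a * ‖x - x₀‖ + b ≤ u x) →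
      ∀ x ∈ V, a * ‖x - x₀‖ + b ≤ u x

/-- Infinity harmonic = comparison with cones from both sides. -/
def InfHarmonic {n : ℕ} (Ω : Set (Euc n)) (u : Euc n → ℝ) : Prop :=
  CmpAbove Ω u ∧ CmpBelow Ω u

/-- m⁺ = max of u on ∂Ω. -/
def mP {n : ℕ} (Ω : Set (Euc n)) (u : Euc n → ℝ) : ℝ := sSup (u '' frontier Ω)

/-- m⁻ = min of u on ∂Ω. -/
def mM {n : ℕ} (Ω : Set (Euc n)) (u : Euc n → ℝ) : ℝ := sInf (u '' frontier Ω)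

/-- S⁺_r := (max(max_{∂B_r} u, m⁺) − m⁺)/r. -/
def SP {n : ℕ} (Ω : Set (Euc n)) (u : Euc n → ℝ) (r : ℝ) : ℝ :=
  (max (sSup (u '' sphere (0 : Euc n) r)) (mP Ω u) - mP Ω u) / r

/-- S⁻_r := (m⁻ − min(min_{∂B_r} u, m⁻))/r. -/
def SM {n : ℕ} (Ω : Set (Euc n)) (u : Euc n → ℝ) (r : ℝ) : ℝ :=
  (mM Ω u - min (sInf (u '' sphere (0 : Euc n) r)) (mM Ω u)) / r

/-- Lip(u, S) := sup_{x≠y ∈ S} |u(x) − u(y)|/|x − y|. -/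
def lipOn {n : ℕ} (u : Euc n → ℝ) (S : Set (Euc n)) : ℝ :=
  sSup ((fun p : Euc n × Euc n => |u p.1 - u p.2| / ‖p.1 - p.2‖) ''
    {p : Euc n × Euc n | p.1 ∈ S ∧ p.2 ∈ S ∧ p.1 ≠ p.2})

section Layers

variable {X : Type*} [PseudoMetricSpace X]

lemma frontier_ball_inter_infDist_gt_subset (A : Set X) (x₀ : X) (r ε : ℝ) :
    frontier (ball x₀ r ∩ {y | ε < infDist y A}) ⊆ sphere x₀ r ∪ {y | infDist y A = ε} := by
  refine (frontier_inter_subset _ _).trans (union_subset_union ?_ ?_)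
  · exact inter_subset_left.trans frontier_ball_subset_sphere
  · exact inter_subset_right.trans fun y hy =>
      (frontier_lt_subset_eq continuous_const (continuous_infDist_pt A) hy).symm

lemma closure_infDist_gt_subset (A : Set X) (ε : ℝ) :
    closure {y | ε < infDist y A} ⊆ {y | ε ≤ infDist y A} :=
  closure_lt_subset_le continuous_const (continuous_infDist_pt A)

end Layers

section NearestPoint

variable {E : Type*} [NormedAddCommGroup E] [NormedSpace ℝ E]

lemma IsCompact.exists_mem_frontier_infDist_eq_dist {A : Set E} (hA : IsCompact A)
    (hne : A.Nonempty) {y : E} (hy : y ∉ A) : ∃ a ∈ frontier A, infDist y A = dist y a := by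
  obtain ⟨a, haA, hya⟩ := hA.exists_infDist_eq_dist hne y
  have hpos : 0 < infDist y A := (hA.isClosed.notMem_iff_infDist_pos hne).1 hy
  have ha_ball : a ∈ closure (ball y (infDist y A)) := by
    rw [closure_ball y hpos.ne', mem_closedBall, dist_comm, hya]
  refine ⟨a, ?_, hya⟩
  rw [frontier_eq_closure_inter_closure]
  exact ⟨subset_closure haA, closure_mono ball_infDist_subset_compl ha_ball⟩

lemma IsCompact.exists_pos_lt_of_infDist_lt {A : Set E} (hA : IsCompact A) (hne : A.Nonempty)
    {u : E → ℝ} (hu : ContinuousOn u (closure Aᶜ)) {M : ℝ} (hM : ∀ a ∈ frontier A, u a < M) :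
    ∃ ε > 0, ∀ y ∉ A, infDist y A < ε → u y < M := by
  obtain ⟨W, hWo, hW⟩ := _root_.continuousOn_iff'.1 hu (Iio M) isOpen_Iio
  have hfrontier_closure : frontier A ⊆ closure Aᶜ := by
    rw [← frontier_compl]
    exact frontier_subset_closure
  have hfrontier_W : frontier A ⊆ W := fun a ha =>
    ((hW ▸ ⟨hM a ha, hfrontier_closure ha⟩ : a ∈ W ∩ closure Aᶜ)).1
  have hfrontier_compact : IsCompact (frontier A) :=
    hA.of_isClosed_subset isClosed_frontier hA.isClosed.frontier_subset
  obtain ⟨ε, hε, hthick⟩ := hfrontier_compact.exists_thickening_subset_open hWo hfrontier_W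
  refine ⟨ε, hε, fun y hy hyε => ?_⟩
  obtain ⟨a, ha, hya⟩ := hA.exists_mem_frontier_infDist_eq_dist hne hy
  have hyW : y ∈ W := hthick (mem_thickening_iff.2 ⟨a, ha, hya ▸ hyε⟩)
  exact (hW.symm ▸ ⟨hyW, subset_closure hy⟩ : y ∈ u ⁻¹' Iio M ∩ closure Aᶜ).1

end NearestPoint

lemma image_neg_fun {α β : Type*} [InvolutiveNeg β] (u : α → β) (s : Set α) :
    (-u) '' s = -(u '' s) := by
  rw [← image_neg_eq_neg, image_image]
  rfl

section Reflection

variable {n : ℕ} {Ω : Set (Euc n)} {u : Euc n → ℝ}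

lemma CmpBelow.neg (h : CmpBelow Ω u) : CmpAbove Ω (-u) := by
  intro V hVo hVb hVΩ x₀ a b hfr x hx
  have := h V hVo hVb hVΩ x₀ (-a) (-b) (fun y hy => by linarith [hfr y hy, Pi.neg_apply u y]) x hx
  simp only [Pi.neg_apply]
  linarith

lemma mP_neg : mP Ω (-u) = -mM Ω u := by
  rw [mP, mM, image_neg_fun, Real.sSup_neg]

lemma SP_neg : SP Ω (-u) = SM Ω u := by
  funext r
  simp only [SP, SM, mP_neg, image_neg_fun, Real.sSup_neg, max_neg_neg]
  ring

lemma SP_nonneg {r : ℝ} (hr : 0 ≤ r) : 0 ≤ SP Ω u r :=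
  div_nonneg (sub_nonneg.2 (le_max_right _ _)) hr

end Reflection

section ExteriorDomain

variable {n : ℕ} {A : Set (Euc n)} {u : Euc n → ℝ}

lemma le_mP_of_mem_frontier (hA : IsCompact A) (hu : ContinuousOn u (closure Aᶜ))
    {a : Euc n} (ha : a ∈ frontier A) : u a ≤ mP Aᶜ u := by
  have hsub : frontier A ⊆ closure Aᶜ := frontier_compl A ▸ frontier_subset_closure
  have hcompact : IsCompact (frontier A) :=
    hA.of_isClosed_subset isClosed_frontier hA.isClosed.frontier_subset
  rw [mP, frontier_compl]
  exact le_csSup (hcompact.image_of_continuousOn (hu.mono hsub)).bddAbove ⟨a, ha, rfl⟩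

lemma le_SP_mul_add_mP_of_mem_sphere (hA1 : A ⊆ ball 0 1) (hu : ContinuousOn u (closure Aᶜ))
    {r : ℝ} (hr : 1 ≤ r) {y : Euc n} (hy : ‖y‖ = r) : u y ≤ SP Aᶜ u r * r + mP Aᶜ u := by
  have hsphere : sphere (0 : Euc n) r ⊆ closure Aᶜ := fun z hz =>
    subset_closure fun hzA => by
      have := mem_ball_zero_iff.1 (hA1 hzA)
      rw [mem_sphere_zero_iff_norm] at hz
      linarith
  have hbdd : BddAbove (u '' sphere 0 r) :=
    ((isCompact_sphere 0 r).image_of_continuousOn (hu.mono hsphere)).bddAbove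
  have hmax : SP Aᶜ u r * r + mP Aᶜ u = max (sSup (u '' sphere 0 r)) (mP Aᶜ u) := by
    rw [SP]
    field_simp
    ring
  rw [hmax]
  exact (le_csSup hbdd ⟨y, mem_sphere_zero_iff_norm.2 hy, rfl⟩).trans (le_max_left _ _)

/-- Comparison with the cone of slope `S⁺_r` and vertex `0` on `B_r ∩ {dist(·, A) > ε}`. -/
lemma le_SP_mul_norm_add (h0A : (0 : Euc n) ∈ A) (hA1 : A ⊆ ball 0 1)
    (hu : ContinuousOn u (closure Aᶜ)) (hcmp : CmpAbove Aᶜ u) {ε c : ℝ} (hε : 0 < ε)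
    (hc : 0 ≤ c) (hlayer : ∀ y, infDist y A = ε → u y ≤ mP Aᶜ u + c) {r : ℝ} (hr : 1 ≤ r)
    {x : Euc n} (hxr : ‖x‖ < r) (hxε : ε < infDist x A) :
    u x ≤ SP Aᶜ u r * ‖x‖ + (mP Aᶜ u + c) := by
  set V := ball (0 : Euc n) r ∩ {y | ε < infDist y A}
  have hVo : IsOpen V := isOpen_ball.inter (isOpen_lt continuous_const (continuous_infDist_pt A))
  have hclosure : closure V ⊆ {y | ε ≤ infDist y A} :=
    (closure_mono inter_subset_right).trans (closure_infDist_gt_subset A ε)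
  have hVA : closure V ⊆ Aᶜ := fun y hy hyA => by
    have : ε ≤ infDist y A := hclosure hy
    rw [infDist_zero_of_mem hyA] at this
    linarith
  have h0V : (0 : Euc n) ∉ V := fun h => by
    have : ε < infDist 0 A := h.2
    rw [infDist_zero_of_mem h0A] at this
    linarith
  have hSP := SP_nonneg (Ω := Aᶜ) (u := u) (zero_le_one.trans hr)
  have hfr : ∀ y ∈ frontier (V \ {0}), u y ≤ SP Aᶜ u r * ‖y - 0‖ + (mP Aᶜ u + c) := by
    rw [sdiff_singleton_eq_self h0V]
    intro y hy
    rw [sub_zero]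
    rcases frontier_ball_inter_infDist_gt_subset A 0 r ε hy with hyr | hyε
    · rw [mem_sphere_zero_iff_norm.1 hyr]
      linarith [le_SP_mul_add_mP_of_mem_sphere hA1 hu hr (mem_sphere_zero_iff_norm.1 hyr)]
    · linarith [hlayer y hyε, mul_nonneg hSP (norm_nonneg y)]
  simpa using hcmp V hVo (isBounded_ball.subset inter_subset_left) hVA 0 _ _ hfr x
    ⟨mem_ball_zero_iff.2 hxr, hxε⟩

theorem le_mP_of_tendsto_SP_nonpos (hA : IsCompact A) (h0A : (0 : Euc n) ∈ A)
    (hA1 : A ⊆ ball 0 1) (hu : ContinuousOn u (closure Aᶜ)) (hcmp : CmpAbove Aᶜ u) {S : ℝ}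
    (hSP : Tendsto (SP Aᶜ u) atTop (𝓝 S)) (hS : S ≤ 0) : ∀ x ∈ Aᶜ, u x ≤ mP Aᶜ u := by
  intro x hx
  refine le_of_forall_pos_le_add fun δ hδ => ?_
  obtain ⟨ε, hε, hlayer⟩ := hA.exists_pos_lt_of_infDist_lt ⟨0, h0A⟩ hu (M := mP Aᶜ u + δ)
    fun a ha => by linarith [le_mP_of_mem_frontier hA hu ha]
  have hxA : 0 < infDist x A := (hA.isClosed.notMem_iff_infDist_pos ⟨0, h0A⟩).1 hx
  set ε' := min (ε / 2) (infDist x A / 2)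
  have hε' : 0 < ε' := lt_min (half_pos hε) (half_pos hxA)
  have hlayer' : ∀ y, infDist y A = ε' → u y ≤ mP Aᶜ u + δ := fun y hy => by
    have hyA : y ∉ A := fun h => by
      rw [infDist_zero_of_mem h] at hy
      linarith
    exact (hlayer y hyA (hy ▸ (min_le_left _ _).trans_lt (half_lt_self hε))).le
  have hcone : ∀ᶠ r in atTop, u x ≤ SP Aᶜ u r * ‖x‖ + (mP Aᶜ u + δ) := by
    filter_upwards [eventually_ge_atTop 1, eventually_gt_atTop ‖x‖] with r hr hxr
    exact le_SP_mul_norm_add h0A hA1 hu hcmp hε' hδ.le hlayer' hr hxr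
      ((min_le_right _ _).trans_lt (half_lt_self hxA))
  have hlim : u x ≤ S * ‖x‖ + (mP Aᶜ u + δ) :=
    ge_of_tendsto ((hSP.mul_const ‖x‖).add_const (mP Aᶜ u + δ)) hcone
  nlinarith [norm_nonneg x]

end ExteriorDomain

theorem stmt4_general {n : ℕ} (A : Set (Euc n)) (hAcl : IsClosed A) (hAbd : IsBounded A)
    (h0A : (0 : Euc n) ∈ A) (hA1 : A ⊆ ball 0 1)
    (u : Euc n → ℝ) (hu : ContinuousOn u (closure Aᶜ)) (hIH : InfHarmonic Aᶜ u)
    (Sp Sm : ℝ) (hSp : Tendsto (SP Aᶜ u) atTop (𝓝 Sp))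
    (hSm : Tendsto (SM Aᶜ u) atTop (𝓝 Sm)) (hS : max Sp Sm = 0) :
    ∀ x ∈ Aᶜ, mM Aᶜ u ≤ u x ∧ u x ≤ mP Aᶜ u := by
  have hA : IsCompact A := isCompact_of_isClosed_isBounded hAcl hAbd
  have hSp0 : Sp ≤ 0 := hS ▸ le_max_left Sp Sm
  have hSm0 : Sm ≤ 0 := hS ▸ le_max_right Sp Sm
  intro x hx
  have hlower := le_mP_of_tendsto_SP_nonpos hA h0A hA1 hu.neg hIH.2.neg
    (SP_neg (Ω := Aᶜ) ▸ hSm) hSm0 x hx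
  rw [mP_neg, Pi.neg_apply] at hlower
  exact ⟨neg_le_neg_iff.1 hlower, le_mP_of_tendsto_SP_nonpos hA h0A hA1 hu hIH.1 hSp hSp0 x hx⟩

/-- Theorem 1(i): if S_∞ = 0 then m⁻ ≤ u ≤ m⁺ in Ω. -/
theorem stmt4 {n : ℕ} (A : Set (Euc n)) (hAcl : IsClosed A) (hAbd : IsBounded A)
    (h0A : (0 : Euc n) ∈ A) (hA1 : A ⊆ ball 0 1)
    (u : Euc n → ℝ) (hu : ContinuousOn u (closure Aᶜ)) (hIH : InfHarmonic Aᶜ u)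
    (hgrow : IsBoundedUnder (· ≤ ·) (cobounded (Euc n)) fun x => |u x| / ‖x‖)
    (Sp Sm : ℝ) (hSp : Tendsto (SP Aᶜ u) atTop (𝓝 Sp))
    (hSm : Tendsto (SM Aᶜ u) atTop (𝓝 Sm)) (hS : max Sp Sm = 0) :
    ∀ x ∈ Aᶜ, mM Aᶜ u ≤ u x ∧ u x ≤ mP Aᶜ u :=
  stmt4_general A hAcl hAbd h0A hA1 u hu hIH Sp Sm hSp hSm hS
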